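/- arXiv:2509.22590 — 3 statements merged into one kernel-verified Lean document; each statement's English description precedes it below -/
import Mathlib

section
/- A space X is mH-separable if and only if for every point x ∈ X and every decreasing sequence {D_n : n ∈ ω} of dense subsets of X, there is a sequence of finite sets H^x_n ⊆ D_n such that for every open neighborhood W of x, W ∩ H^x_n ≠ ∅ for all but finitely many n. -/
/-!
An infinite union `⋃ n ∈ A, F n` is dense for every infinite `A` exactly when every nonempty
open set meets all but finitely many `F n`. This gives the forward direction at once. Conversely,
in a countable space the local witnesses `H x` can be merged diagonally: enumerating the points
as `x₀, x₁, …`, the `n`-th finite set collects `H xₖ n` for `k ≤ n`, so it eventually contains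
each `H x n`, and hence eventually meets every nonempty open set.
-/

/-- mH-separable: the H-separable conclusion for monotone decreasing sequences
of dense sets. -/
def mHSeparable (X : Type*) [TopologicalSpace X] : Prop :=
  ∀ D : ℕ → Set X, (∀ n, D (n + 1) ⊆ D n) → (∀ n, Dense (D n)) →
    ∃ F : ℕ → Finset X, (∀ n, (F n : Set X) ⊆ D n) ∧
      ∀ A : Set ℕ, A.Infinite → Dense (⋃ n ∈ A, (F n : Set X))

open Filter Set

theorem dense_biUnion_of_infinite_iff_eventually_inter_nonempty {X : Type*}
    [TopologicalSpace X] (F : ℕ → Set X) :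
    (∀ A : Set ℕ, A.Infinite → Dense (⋃ n ∈ A, F n)) ↔
      ∀ U : Set X, IsOpen U → U.Nonempty → ∀ᶠ n in atTop, (U ∩ F n).Nonempty := by
  constructor
  · intro hdense U hU hne
    by_contra hmiss
    rw [not_eventually, Nat.frequently_atTop_iff_infinite] at hmiss
    obtain ⟨y, hyU, hy⟩ := (hdense _ hmiss).inter_open_nonempty U hU hne
    obtain ⟨n, hn, hyF⟩ := mem_iUnion₂.mp hy
    exact hn ⟨y, hyU, hyF⟩
  · intro hmeet A hA
    rw [dense_iff_inter_open]
    intro U hU hne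
    obtain ⟨n, hnA, hn⟩ :=
      ((Nat.frequently_atTop_iff_infinite.mpr hA).and_eventually (hmeet U hU hne)).exists
    exact hn.mono (inter_subset_inter_right _ (subset_biUnion_of_mem hnA))

theorem exists_eventually_superset_of_countable {ι α : Type*} [Countable ι]
    (H : ι → ℕ → Finset α) :
    ∃ G : ℕ → Finset α, (∀ n, (G n : Set α) ⊆ ⋃ i, (H i n : Set α)) ∧
      ∀ i, ∀ᶠ n in atTop, H i n ⊆ G n := by
  classical
  cases isEmpty_or_nonempty ι with
  | inl _ => exact ⟨fun _ => ∅, fun n => by simp, fun i => isEmptyElim i⟩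
  | inr _ =>
    obtain ⟨e, he⟩ := exists_surjective_nat ι
    refine ⟨fun n => (Finset.range (n + 1)).biUnion fun k => H (e k) n, fun n => ?_, fun i => ?_⟩
    · rw [Finset.coe_biUnion]
      exact iUnion₂_subset fun k _ => subset_iUnion (fun i => (H i n : Set α)) (e k)
    · obtain ⟨k, rfl⟩ := he i
      filter_upwards [eventually_ge_atTop k] with n hkn
      exact Finset.subset_biUnion_of_mem (fun k => H (e k) n)
        (Finset.mem_range_succ_iff.mpr hkn)

/-- A countable space is mH-separable iff for every point `x` and decreasing sequence
of dense sets `D n` there are finite `H n ⊆ D n` so that every open neighborhood of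
`x` meets all but finitely many of the `H n`. -/
theorem mHSeparable_iff_local (X : Type*) [TopologicalSpace X] [Countable X] :
    mHSeparable X ↔
      ∀ x : X, ∀ D : ℕ → Set X, (∀ n, D (n + 1) ⊆ D n) → (∀ n, Dense (D n)) →
        ∃ H : ℕ → Finset X, (∀ n, (H n : Set X) ⊆ D n) ∧
          ∀ W : Set X, IsOpen W → x ∈ W →
            ∀ᶠ n in Filter.atTop, (W ∩ (H n : Set X)).Nonempty := by
  simp only [mHSeparable, dense_biUnion_of_infinite_iff_eventually_inter_nonempty]
  constructor
  · intro h x D hdec hdense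
    obtain ⟨F, hFD, hF⟩ := h D hdec hdense
    exact ⟨F, hFD, fun W hW hxW => hF W hW ⟨x, hxW⟩⟩
  · intro h D hdec hdense
    choose H hHD hH using fun x => h x D hdec hdense
    obtain ⟨G, hGH, hG⟩ := exists_eventually_superset_of_countable H
    refine ⟨G, fun n => (hGH n).trans (iUnion_subset fun x => hHD x n), ?_⟩
    rintro U hU ⟨x, hxU⟩
    filter_upwards [hG x, hH x U hU hxU] with n hsub hmeet
    exact hmeet.mono (inter_subset_inter_right _ (Finset.coe_subset.mpr hsub))
end

section
/- Suppose a countable space X = {q_ℓ : ℓ ∈ ω} has a partition {Q_t : t ∈ 2^{<ω}} into dense sets, and there is a family {f_α : α < 𝔟} of functions in ω^ω that is unbounded with respect to ≤* together with points {ρ_α : α < 𝔟} ⊆ 2^ω such that each set B_α = ⋃{Q_{ρ_α↾n} ∩ {q_ℓ : ℓ < f_α(n)} : n ∈ ω} is closed and discrete in X. Then X is not H-separable: there is a sequence of dense sets (indexed by 2^{<ω}) admitting no H-selection. -/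
/-- The initial segment of `ρ : 2^ω` of length `n`, as an element of `2^{<ω}`. -/
def seg (ρ : ℕ → Bool) (n : ℕ) : List Bool := List.ofFn (fun i : Fin n => ρ i)

/-- `B = ⋃_n (Q_{ρ↾n} ∩ {q_ℓ : ℓ < f(n)})`. -/
def Bset {X : Type*} (qe : ℕ → X) (Qt : List Bool → Set X) (ρ : ℕ → Bool)
    (f : ℕ → ℕ) : Set X :=
  ⋃ n, Qt (seg ρ n) ∩ {x | ∃ ℓ < f n, x = qe ℓ}

/-!
Take `D_t = Q_t`. Given finite `H_t ⊆ Q_t`, let `g(n)` bound the indices `ℓ` of the points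
`q_ℓ` in the finitely many `H_t` with `|t| = n`. Some `f_α` exceeds `g` on an infinite set
`I`, and for `n ∈ I` we get `H_{ρ_α↾n} ⊆ B_α`. So with `A = {ρ_α↾n : n ∈ I}` the union
`⋃_{t ∈ A} H_t` lies in the closed discrete set `B_α`; were it dense, `B_α = X` would make
every point isolated, and an isolated point lies in every dense set, which is impossible
for the disjoint dense sets `Q_t`.
-/

open Set

theorem length_seg (ρ : ℕ → Bool) (n : ℕ) : (seg ρ n).length = n :=
  List.length_ofFn

theorem seg_injective (ρ : ℕ → Bool) : Function.Injective (seg ρ) := fun m n h => by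
  simpa only [length_seg] using congrArg List.length h

theorem apply_mem_Bset {X : Type*} {qe : ℕ → X} {Qt : List Bool → Set X} {ρ : ℕ → Bool}
    {f : ℕ → ℕ} {n ℓ : ℕ} (hQ : qe ℓ ∈ Qt (seg ρ n)) (hℓ : ℓ < f n) :
    qe ℓ ∈ Bset qe Qt ρ f :=
  mem_iUnion.2 ⟨n, hQ, ℓ, hℓ, rfl⟩

theorem List.exists_bound_by_length {α β : Type*} [Finite α] (H : List α → Finset β)
    (e : β → ℕ) : ∃ g : ℕ → ℕ, ∀ t, ∀ x ∈ H t, e x < g t.length := by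
  have hbdd : ∀ n, BddAbove (⋃ t ∈ {l : List α | l.length = n}, e '' (H t : Set β)) :=
    fun n => ((List.finite_length_eq α n).biUnion fun t _ => (H t).finite_toSet.image e).bddAbove
  choose M hM using hbdd
  refine ⟨fun n => M n + 1, fun t x hx => Nat.lt_succ_of_le (hM t.length ?_)⟩
  exact mem_biUnion (x := t) rfl (mem_image_of_mem e hx)

theorem Dense.mem_of_isOpen_singleton {X : Type*} [TopologicalSpace X] {s : Set X} {x : X}
    (hs : Dense s) (hx : IsOpen {x}) : x ∈ s := by
  obtain ⟨y, rfl, hy⟩ := hs.inter_open_nonempty {x} hx (singleton_nonempty x)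
  exact hy

theorem not_dense_of_subset_closed_discrete {X : Type*} [TopologicalSpace X] [Nonempty X]
    {Q₁ Q₂ B S : Set X} (h₁ : Dense Q₁) (h₂ : Dense Q₂) (hQ : Disjoint Q₁ Q₂)
    (hB : IsClosed B) (hiso : ∀ x ∈ B, ∃ W : Set X, IsOpen W ∧ x ∈ W ∧ W ∩ B = {x})
    (hSB : S ⊆ B) : ¬ Dense S := by
  intro hS
  have hBuniv : B = univ := hB.closure_eq.symm.trans (hS.mono hSB).closure_eq
  obtain ⟨x⟩ := ‹Nonempty X›
  obtain ⟨W, hWo, -, hWB⟩ := hiso x (hBuniv ▸ mem_univ x)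
  rw [hBuniv, inter_univ] at hWB
  subst hWB
  exact disjoint_left.mp hQ (h₁.mem_of_isOpen_singleton hWo) (h₂.mem_of_isOpen_singleton hWo)

theorem not_HSeparable_of_closed_discrete_Bsets_general {X : Type*} [TopologicalSpace X]
    (qe : ℕ → X) (hqe : Function.Surjective qe)
    (Qt : List Bool → Set X)
    (hdense : ∀ t, Dense (Qt t))
    (hdisj : Pairwise (Function.onFun Disjoint Qt))
    {ι : Type*} (f : ι → ℕ → ℕ)
    (hunb : ∀ g : ℕ → ℕ, ∃ i, {n | g n < f i n}.Infinite)
    (ρ : ι → ℕ → Bool)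
    (hBclosed : ∀ i, IsClosed (Bset qe Qt (ρ i) (f i)))
    (hBdiscrete : ∀ i, ∀ x ∈ Bset qe Qt (ρ i) (f i),
      ∃ W : Set X, IsOpen W ∧ x ∈ W ∧ W ∩ Bset qe Qt (ρ i) (f i) = {x}) :
    ∃ D : List Bool → Set X, (∀ t, Dense (D t)) ∧
      ∀ H : List Bool → Finset X, (∀ t, (H t : Set X) ⊆ D t) →
        ∃ A : Set (List Bool), A.Infinite ∧
          ¬ Dense (⋃ t ∈ A, (H t : Set X)) := by
  refine ⟨Qt, hdense, fun H hH => ?_⟩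
  obtain ⟨e, he⟩ := hqe.hasRightInverse
  obtain ⟨g, hg⟩ := List.exists_bound_by_length H e
  obtain ⟨i, hi⟩ := hunb g
  have : Nonempty X := ⟨qe 0⟩
  refine ⟨seg (ρ i) '' {n | g n < f i n}, hi.image (seg_injective _).injOn, ?_⟩
  refine not_dense_of_subset_closed_discrete (hdense []) (hdense [true]) (hdisj (by simp))
    (hBclosed i) (hBdiscrete i) ?_
  simp only [iUnion_subset_iff, mem_image, forall_exists_index, and_imp]
  rintro _ n hn rfl x hx
  have hlt : e x < f i n := (length_seg (ρ i) n ▸ hg _ x hx).trans hn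
  rw [← he x] at hx ⊢
  exact apply_mem_Bset (hH _ hx) hlt

/-- Lemma 3.1: if a countable space has a partition into dense sets `Q_t` and an
unbounded family `f_α` with branches `ρ_α` such that each `B_α` is closed and
discrete, then the space is not H-separable: the dense sequence `{Q_t}` admits no
H-selection. -/
theorem not_HSeparable_of_closed_discrete_Bsets {X : Type*} [TopologicalSpace X]
    [Countable X] (qe : ℕ → X) (hqe : Function.Surjective qe)
    (Qt : List Bool → Set X)
    (hdense : ∀ t, Dense (Qt t))
    (hdisj : Pairwise (Function.onFun Disjoint Qt))
    (hcover : (⋃ t, Qt t) = Set.univ)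
    {ι : Type*} (f : ι → ℕ → ℕ)
    (hunb : ∀ g : ℕ → ℕ, ∃ i, {n | g n < f i n}.Infinite)
    (ρ : ι → ℕ → Bool)
    (hBclosed : ∀ i, IsClosed (Bset qe Qt (ρ i) (f i)))
    (hBdiscrete : ∀ i, ∀ x ∈ Bset qe Qt (ρ i) (f i),
      ∃ W : Set X, IsOpen W ∧ x ∈ W ∧ W ∩ Bset qe Qt (ρ i) (f i) = {x}) :
    ∃ D : List Bool → Set X, (∀ t, Dense (D t)) ∧
      ∀ H : List Bool → Finset X, (∀ t, (H t : Set X) ⊆ D t) →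
        ∃ A : Set (List Bool), A.Infinite ∧
          ¬ Dense (⋃ t ∈ A, (H t : Set X)) :=
  not_HSeparable_of_closed_discrete_Bsets_general qe hqe Qt hdense hdisj f hunb ρ hBclosed
    hBdiscrete
end

section
/- Let Q be a countable set, let τ be a family of subsets of Q with |τ| < 𝔟, and let (I_k)_{k∈ω} be infinite pairwise disjoint sets I_k ⊆ Q such that for each U ∈ τ, I_k ⊆* U for all but finitely many k. Then there exists a selection S with |S ∩ I_k| = 1 for all k such that S ⊆* U for every U ∈ τ. -/
universe u

open Cardinal in
/-- The bounding number `𝔟`: the least cardinality of a `≤*`-unbounded family in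
`ω^ω`. -/
noncomputable def bNum : Cardinal :=
  sInf { c : Cardinal | ∃ F : Set (ℕ → ℕ), #F = c ∧
    ∀ g : ℕ → ℕ, ∃ f ∈ F, {n : ℕ | g n < f n}.Infinite }

/-- Diagonal selection: given fewer than `𝔟` many sets `U ∈ τ` and pairwise disjoint
infinite sets `I_k` each almost contained in every `U ∈ τ` for all but finitely many
`k`, there is a selection of one point from each `I_k` that is almost contained in
every `U ∈ τ`. -/
theorem diagonal_selection {Q : Type u} [Countable Q] (τ : Set (Set Q))
    (hτ : Cardinal.mk τ < Cardinal.lift.{u} bNum)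
    (I : ℕ → Set Q) (hinf : ∀ k, (I k).Infinite)
    (hdisj : Pairwise (Function.onFun Disjoint I))
    (hsub : ∀ U ∈ τ, ∀ᶠ k in Filter.atTop, (I k \ U).Finite) :
    ∃ s : ℕ → Q, (∀ k, s k ∈ I k) ∧
      ∀ U ∈ τ, (Set.range s \ U).Finite := by
  classical
  have he : ∀ k, Nonempty (ℕ ≃ (I k)) := fun k => by
    have := (hinf k).to_subtype
    exact nonempty_equiv_of_countable
  let e : ∀ k, ℕ ≃ (I k) := fun k => (he k).some
  let g : τ → ℕ → ℕ := fun U k =>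
    if h : {n : ℕ | ((e k n : Q) ∉ (U : Set Q))}.Finite then h.toFinset.sup id + 1 else 0
  have hgfin : ∀ (U : τ) k, (I k \ (U : Set Q)).Finite →
      {n : ℕ | ((e k n : Q) ∉ (U : Set Q))}.Finite := by
    intro U k hf
    have hset : {n : ℕ | ((e k n : Q) ∉ (U : Set Q))}
        = (fun n => (e k n : Q)) ⁻¹' (I k \ (U : Set Q)) := by
      ext n
      simp [Set.mem_preimage, (e k n).2]
    rw [hset]
    apply Set.Finite.preimage _ hf
    intro a _ b _ hab
    exact (e k).injective (Subtype.coe_injective hab)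
  have hlt : Cardinal.mk (Set.range g) < bNum := by
    have h1 : Cardinal.lift.{u} (Cardinal.mk (Set.range g))
        ≤ Cardinal.lift.{0} (Cardinal.mk τ) := Cardinal.mk_range_le_lift
    rw [Cardinal.lift_uzero] at h1
    exact Cardinal.lift_lt.mp (h1.trans_lt hτ)
  have hnot : ¬ ∀ h : ℕ → ℕ, ∃ f ∈ Set.range g, {n : ℕ | h n < f n}.Infinite := by
    intro hcon
    have hmem : Cardinal.mk (Set.range g) ∈ { c : Cardinal | ∃ F : Set (ℕ → ℕ),
        Cardinal.mk F = c ∧ ∀ g : ℕ → ℕ, ∃ f ∈ F, {n : ℕ | g n < f n}.Infinite } :=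
      ⟨Set.range g, rfl, hcon⟩
    exact absurd (csInf_le' hmem : bNum ≤ _) (not_le.mpr hlt)
  push_neg at hnot
  obtain ⟨F, hF⟩ := hnot
  refine ⟨fun k => (e k (F k) : Q), fun k => (e k (F k)).2, ?_⟩
  intro U hU
  obtain ⟨N, hN⟩ := Filter.eventually_atTop.mp (hsub U hU)
  have hfinset : {k : ℕ | F k < g ⟨U, hU⟩ k}.Finite :=
    hF _ ⟨⟨U, hU⟩, rfl⟩
  obtain ⟨M, hM⟩ := hfinset.bddAbove
  have key : ∀ k, N ≤ k → M < k → ((e k (F k) : Q)) ∈ U := by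
    intro k hk1 hk2
    have hfin := hgfin ⟨U, hU⟩ k (hN k hk1)
    have hge : g ⟨U, hU⟩ k ≤ F k := by
      by_contra hlt'
      exact absurd (hM (Set.mem_setOf.mpr (not_le.mp hlt'))) (not_le.mpr hk2)
    by_contra hmem
    have h1 : F k ∈ hfin.toFinset := hfin.mem_toFinset.mpr hmem
    have h2 : F k ≤ hfin.toFinset.sup id := Finset.le_sup (f := id) h1
    have h3 : g ⟨U, hU⟩ k = hfin.toFinset.sup id + 1 := dif_pos hfin
    omega
  apply Set.Finite.subset ((Set.finite_Iio (max N M + 1)).image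
    (fun k => (e k (F k) : Q)))
  rintro x ⟨⟨k, rfl⟩, hxU⟩
  refine ⟨k, ?_, rfl⟩
  simp only [Set.mem_Iio]
  by_contra h
  push_neg at h
  exact hxU (key k (by omega) (by omega))
end
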